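/- Monotone decrease of the minimized ICI power in N: for fixed X even and υ = X/2, ε ∈ [-1/2,1/2], each term Υ_m(X/2) = sin⁻²(π(X/2 + mX + ε)/N) + sin⁻²(π(X/2 - X - mX + ε)/N) satisfies Υ_m(X/2) ≤ sin⁻²(π(X/2 + mX - 1/2)/N) + sin⁻²(π(X/2 + mX + 1/2)/N); i.e., over ε ∈ [-1/2, 1/2] the function ε ↦ Υ_m(X/2) attains its maximum at ε = ±1/2. -/

import Mathlib

open Real Set

/-!
`1 / sin²` is convex on `(0, π)`, being the convex decreasing function `1 / t²` of the concave
positive function `sin`. Hence `f y = 1 / sin² (π y / N)` is convex on `(0, N)`, which contains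
`[c - 1/2, c + 1/2]` for `c = X/2 + mX` because `X ≥ 2` and `(2m + 1) X ≤ N`. The even convex
function `ε ↦ f (c + ε) + f (c - ε)` on `[-1/2, 1/2]` is then largest at the endpoints.
-/

section
variable {𝕜 : Type*} [Field 𝕜] [LinearOrder 𝕜] [IsStrictOrderedRing 𝕜] {f : 𝕜 → 𝕜} {c b x : 𝕜}

-- `c + x` and `c - x` are complementary convex combinations of the endpoints `c ∓ b`.
theorem ConvexOn.map_add_add_map_sub_le (hf : ConvexOn 𝕜 (Icc (c - b) (c + b)) f)
    (hx : |x| ≤ b) : f (c + x) + f (c - x) ≤ f (c - b) + f (c + b) := by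
  obtain ⟨hbx, hxb⟩ := abs_le.1 hx
  rcases (abs_nonneg x).trans hx |>.eq_or_lt with hb | hb
  · obtain rfl : x = 0 := by simpa [← hb] using hx
    simp only [← hb, add_zero, sub_zero, le_refl]
  have hl : c - b ∈ Icc (c - b) (c + b) := left_mem_Icc.2 (by linarith)
  have hr : c + b ∈ Icc (c - b) (c + b) := right_mem_Icc.2 (by linarith)
  set s := (b - x) / (2 * b)
  set t := (b + x) / (2 * b)
  have hs : 0 ≤ s := div_nonneg (by linarith) (by linarith)
  have ht : 0 ≤ t := div_nonneg (by linarith) (by linarith)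
  have hst : s + t = 1 := by simp only [s, t]; field_simp; ring
  have h₁ : s * (c - b) + t * (c + b) = c + x := by simp only [s, t]; field_simp; ring
  have h₂ : t * (c - b) + s * (c + b) = c - x := by simp only [s, t]; field_simp; ring
  have e₁ := hf.2 hl hr hs ht hst
  have e₂ := hf.2 hl hr ht hs (by rw [add_comm, hst])
  simp only [smul_eq_mul, h₁, h₂] at e₁ e₂
  linear_combination e₁ + e₂ + (f (c - b) + f (c + b)) * hst
end

theorem convexOn_one_div_sq : ConvexOn ℝ (Ioi 0) fun t : ℝ => 1 / t ^ 2 :=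
  (convexOn_zpow (-2)).congr fun t _ => by simp [zpow_neg]

theorem antitoneOn_one_div_sq : AntitoneOn (fun t : ℝ => 1 / t ^ 2) (Ioi 0) :=
  fun _ hx _ _ hxy =>
    one_div_le_one_div_of_le (pow_pos hx 2) (pow_le_pow_left₀ (le_of_lt hx) hxy 2)

theorem convexOn_one_div_sin_sq : ConvexOn ℝ (Ioo 0 π) fun x => 1 / sin x ^ 2 := by
  have hsin : ConcaveOn ℝ (Ioo 0 π) sin :=
    strictConcaveOn_sin_Icc.concaveOn.subset Ioo_subset_Icc_self (convex_Ioo 0 π)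
  have himage : sin '' Ioo 0 π ⊆ Ioi 0 := by
    rintro _ ⟨x, hx, rfl⟩; exact sin_pos_of_pos_of_lt_pi hx.1 hx.2
  have hconv : Convex ℝ (sin '' Ioo 0 π) :=
    (isPreconnected_Ioo.image _ continuousOn_sin).ordConnected.convex
  exact (convexOn_one_div_sq.subset himage hconv).comp_concaveOn hsin
    (antitoneOn_one_div_sq.mono himage)

theorem convexOn_one_div_sin_sq_mul_div {L : ℝ} (hL : 0 < L) :
    ConvexOn ℝ (Ioo 0 L) fun y => 1 / sin (π * y / L) ^ 2 := by
  refine ((convexOn_one_div_sin_sq.comp_linearMap (LinearMap.mulLeft ℝ (π / L))).subset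
    ?_ (convex_Ioo 0 L)).congr fun y _ => by simp [mul_div_right_comm]
  intro y hy
  simp only [mem_preimage, LinearMap.mulLeft_apply, mem_Ioo]
  constructor
  · exact mul_pos (div_pos pi_pos hL) hy.1
  · rw [div_mul_eq_mul_div, div_lt_iff₀ hL]; exact mul_lt_mul_of_pos_left hy.2 pi_pos

theorem ici_term_even_and_max_at_endpoints_general
    (N X N_U : ℕ) (hN : N = X * N_U) (hX2 : 2 ≤ X)
    (hNUpos : 0 < N_U)
    (m : ℕ) (hm : m ≤ N_U / 2 - 1)
    (g : ℝ → ℝ)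
    (hg : g = fun ε => 1 / (sin (π * ((X : ℝ) / 2 + m * X + ε) / N))^2
        + 1 / (sin (π * ((X : ℝ) / 2 + m * X - ε) / N))^2) :
    ∀ ε : ℝ, |ε| ≤ 1/2 → g ε = g (-ε) ∧ g ε ≤ g (1/2) := by
  intro ε hε
  subst hg
  have hNat : (2 * m + 1) * X ≤ N := by
    rw [hN, Nat.mul_comm X]
    exact Nat.mul_le_mul_right X (by omega)
  have hX : (2 : ℝ) ≤ X := by exact_mod_cast hX2
  have hNX : ((2 * m + 1) * X : ℝ) ≤ N := by exact_mod_cast hNat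
  have hm0 : (0 : ℝ) ≤ m := m.cast_nonneg
  have hN0 : (0 : ℝ) < N := by nlinarith
  have hsub : Icc ((X : ℝ) / 2 + m * X - 1 / 2) (X / 2 + m * X + 1 / 2) ⊆ Ioo 0 N :=
    Icc_subset_Ioo (by nlinarith) (by nlinarith)
  refine ⟨by simp only [sub_neg_eq_add, ← sub_eq_add_neg]; ring, ?_⟩
  have hconv := (convexOn_one_div_sin_sq_mul_div hN0).subset hsub (convex_Icc _ _)
  simpa only [add_comm] using hconv.map_add_add_map_sub_le hε

theorem ici_term_even_and_max_at_endpoints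
    (N X N_U : ℕ) (hN : N = X * N_U) (hXeven : Even X) (hX2 : 2 ≤ X)
    (hNUpos : 0 < N_U) (hNUeven : Even N_U)
    (m : ℕ) (hm : m ≤ N_U / 2 - 1)
    (g : ℝ → ℝ)
    (hg : g = fun ε => 1 / (sin (π * ((X : ℝ) / 2 + m * X + ε) / N))^2
        + 1 / (sin (π * ((X : ℝ) / 2 + m * X - ε) / N))^2) :
    ∀ ε : ℝ, |ε| ≤ 1/2 → g ε = g (-ε) ∧ g ε ≤ g (1/2) :=
  ici_term_even_and_max_at_endpoints_general N X N_U hN hX2 hNUpos m hm g hg
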